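/- arXiv:math/9706225 — 2 statements merged into one kernel-verified Lean document; each statement's English description precedes it below -/
import Mathlib

section
/- Let μ = μ^{<μ} > ℵ₀, λ = μ⁺, and let ℙ = ℙ(C) be the club-coding poset associated to a club C ⊆ λ, a choice of μ-filtrations of each α < λ with canonical functions f_α, and clubs C_{αβ} ⊆ μ (for α < β < λ) with f_α(i) < f_β(i) for all i ∈ C_{αβ}. For every α < λ and β < μ, the set D_{αβ} = {p ∈ ℙ : α ∈ B^p and δ^p ≥ β} is dense and open in ℙ (dense: every condition has an extension in D_{αβ}; open: upward closed under the extension order). -/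
open Cardinal Ordinal Set

/-- The order type of a set of ordinals (the unique ordinal whose lift equals the
order type of the induced well-order; any set of ordinals occurring below is bounded,
hence small, so this ordinal exists). -/
noncomputable def otp (s : Set Ordinal) : Ordinal :=
  sInf {o : Ordinal | Ordinal.lift.{1, 0} o =
    Ordinal.type (Subrel ((· < ·) : Ordinal → Ordinal → Prop) (· ∈ s))}

/-- `C` is a closed unbounded subset of (the set of ordinals below) `κ`:
it consists of ordinals `< κ`, is unbounded in `κ`, and contains the supremum
of each of its nonempty subsets that is bounded below `κ`. -/
def IsClubOrd (κ : Ordinal) (C : Set Ordinal) : Prop :=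
  C ⊆ Set.Iio κ ∧
  (∀ a < κ, ∃ b ∈ C, a ≤ b) ∧
  (∀ S ⊆ C, S.Nonempty → sSup S < κ → sSup S ∈ C)

/-- `⟨a i : i < μ⟩` is a `μ`-filtration of the ordinal `α`: an increasing continuous
sequence of subsets of `α`, each of cardinality `< μ`, with union `α`. -/
def IsFiltrationOrd (μ : Cardinal) (α : Ordinal) (a : Ordinal → Set Ordinal) : Prop :=
  (∀ i < μ.ord, a i ⊆ Set.Iio α) ∧
  (∀ i j : Ordinal, i ≤ j → j < μ.ord → a i ⊆ a j) ∧
  (∀ ν < μ.ord, Order.IsSuccLimit ν → a ν = ⋃ i ∈ Set.Iio ν, a i) ∧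
  (∀ i < μ.ord, Cardinal.mk ↥(a i) < Cardinal.lift.{1,0} μ) ∧
  (⋃ i ∈ Set.Iio μ.ord, a i) = Set.Iio α

/-- A condition in the club-coding poset `ℙ(C)` associated to: a cardinal `μ` (with
`λ = μ⁺`), a club `C ⊆ λ`, the canonical functions `f α` (for `α < λ`), and clubs
`Cab α β ⊆ μ` (for `α < β < λ`) on which `f α < f β`.  A condition is a quadruple
`(B, F, c, g)` where `B ⊆ λ` has size `< μ`; `F` is a partial function from `μ × μ`
to `{0,1}` with domain of size `< μ` such that for each `α ∈ B` the set
`{i < μ : (i, f α i) ∈ dom F}` is an ordinal `j α`; `c` assigns to each `α ∈ B` a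
nonempty closed subset of `j α`, all with the same maximum `δ`, on which `F (i, f α i)`
is `1` if `α ∈ C` and `0` if `α ∉ C`; and `g` is a partial function from pairs
`α < β` from `B` into `μ` such that `c α ∖ g (α, β)` is nonempty and contained in
`Cab α β`. -/
structure ClubCond (μ : Cardinal) (C : Set Ordinal) (f : Ordinal → Ordinal → Ordinal)
    (Cab : Ordinal → Ordinal → Set Ordinal) where
  B : Set Ordinal
  F : Ordinal → Ordinal → Option (Fin 2)
  c : Ordinal → Set Ordinal
  g : Ordinal → Ordinal → Option Ordinal
  j : Ordinal → Ordinal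
  δ : Ordinal
  B_sub : B ⊆ Set.Iio (Order.succ μ).ord
  B_card : Cardinal.mk ↥B < Cardinal.lift.{1, 0} μ
  F_dom_sub : ∀ i k : Ordinal, (F i k).isSome → i < μ.ord ∧ k < μ.ord
  F_card : Cardinal.mk ↥{x : Ordinal × Ordinal | (F x.1 x.2).isSome} <
    Cardinal.lift.{1, 0} μ
  j_spec : ∀ α ∈ B, {i : Ordinal | i < μ.ord ∧ (F i (f α i)).isSome} = Set.Iio (j α)
  c_sub : ∀ α ∈ B, c α ⊆ Set.Iio (j α)
  c_closed : ∀ α ∈ B, ∀ S ⊆ c α, S.Nonempty → sSup S ∈ c α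
  c_max : ∀ α ∈ B, δ ∈ c α ∧ ∀ x ∈ c α, x ≤ δ
  F_one : ∀ α ∈ B, α ∈ C → ∀ i ∈ c α, F i (f α i) = some 1
  F_zero : ∀ α ∈ B, α ∉ C → ∀ i ∈ c α, F i (f α i) = some 0
  g_dom : ∀ α β : Ordinal, (g α β).isSome → α ∈ B ∧ β ∈ B ∧ α < β
  g_rng : ∀ α β ξ : Ordinal, g α β = some ξ → ξ < μ.ord
  g_cond : ∀ α β ξ : Ordinal, g α β = some ξ →
    (c α \ Set.Iio ξ).Nonempty ∧ c α \ Set.Iio ξ ⊆ Cab α β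

/-- The extension order of the club-coding poset: `q` extends `p` (written `p.le q`)
iff `B^p ⊆ B^q`, `F^p ⊆ F^q`, `g^p ⊆ g^q`, each `c^p α` (for `α ∈ B^p`) is an initial
segment of `c^q α`, and if `δ^p < δ^q` then every pair from `B^p` is in `dom g^q`. -/
def ClubCond.le {μ : Cardinal} {C : Set Ordinal} {f : Ordinal → Ordinal → Ordinal}
    {Cab : Ordinal → Ordinal → Set Ordinal}
    (p q : ClubCond μ C f Cab) : Prop :=
  p.B ⊆ q.B ∧
  (∀ i k : Ordinal, ∀ v : Fin 2, p.F i k = some v → q.F i k = some v) ∧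
  (∀ α β ξ : Ordinal, p.g α β = some ξ → q.g α β = some ξ) ∧
  (∀ α ∈ p.B, p.c α ⊆ q.c α ∧ ∀ x ∈ q.c α, x ≤ p.δ → x ∈ p.c α) ∧
  (p.δ < q.δ → ∀ α ∈ p.B, ∀ β ∈ p.B, α < β → (q.g α β).isSome)

/-!
Openness holds because `δ^p ∈ c^p_α` stays in `c^q_α` for `q ≥ p`, so `δ` cannot decrease.
For density, `μ` is regular (by König, from `μ^{<μ} = μ`), so the first coordinates of
`dom f^p` are bounded below `μ`, and the fewer than `μ` clubs `C_{γγ'}` for `γ < γ'` in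
`B = B^p ∪ {α}` have a common point `δ` above that bound and above `β`. The extension of `p` puts
`δ` on top of every `c_γ`, fills in `f` at the points `(i, f_γ(i))` with `i ≤ δ`, and sets
`g(γ, γ') = δ` on the new pairs.
-/

universe u

theorem Cardinal.isRegular_of_powerlt_self {μ : Cardinal} (hμ : ℵ₀ ≤ μ) (h : μ ^< μ = μ) :
    μ.IsRegular :=
  ⟨hμ, not_lt.1 fun hcof => ((lt_power_cof_ord hμ).trans_le (le_powerlt μ hcof)).ne' h⟩

theorem Cardinal.IsRegular.exists_lt_ord_forall_lt {μ : Cardinal.{u}} (hμ : μ.IsRegular)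
    {S : Set Ordinal.{u}} (hS : S ⊆ Iio μ.ord) (hcard : #S < Cardinal.lift.{u + 1} μ) :
    ∃ b < μ.ord, ∀ x ∈ S, x < b := by
  have hcof : Cardinal.lift.{u} #S < (Ordinal.lift.{u + 1} μ.ord).cof := by
    rwa [← Ordinal.lift_cof, hμ.cof_ord, Cardinal.lift_id'.{u, u + 1}]
  have hbdd : BddAbove (range fun x : S => (x : Ordinal) + 1) :=
    ⟨μ.ord, by rintro _ ⟨y, rfl⟩; exact Order.add_one_le_of_lt (hS y.2)⟩
  refine ⟨⨆ x : S, (x : Ordinal) + 1,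
    Ordinal.lift_iSup_add_one_lt_of_lt_cof hcof fun x => hS x.2, fun x hx => ?_⟩
  exact (Order.lt_add_one_iff.2 le_rfl).trans_le (le_ciSup hbdd ⟨x, hx⟩)

theorem IsClubOrd.isClub_preimage_val {κ : Ordinal.{u}} {D : Set Ordinal.{u}}
    (hD : IsClubOrd κ D) : IsClub (Subtype.val ⁻¹' D : Set (Iio κ)) := by
  refine ⟨fun d hd hne _ a ha => ?_, fun a => ?_⟩
  · have hlub : IsLUB (Subtype.val '' d) a.1 := by
      refine ⟨?_, fun b hb => ?_⟩
      · rintro _ ⟨x, hx, rfl⟩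
        exact ha.1 hx
      · by_contra! hba
        have hb' : (⟨b, hba.trans a.2⟩ : Iio κ) ∈ upperBounds d := fun x hx => hb ⟨x, hx, rfl⟩
        exact hba.not_ge (ha.2 hb')
    have hsup := hlub.csSup_eq (hne.image _)
    have := hD.2.2 _ (by rintro _ ⟨x, hx, rfl⟩; exact hd hx) (hne.image _) (hsup ▸ a.2)
    rwa [hsup] at this
  · obtain ⟨b, hbD, hab⟩ := hD.2.1 a a.2
    exact ⟨⟨b, hD.1 hbD⟩, hbD, hab⟩

theorem exists_lt_mem_iInter_of_isClubOrd {μ : Cardinal.{u}} (hμ : μ.IsRegular) (hunc : ℵ₀ < μ)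
    {ι : Type (u + 1)} (hι : #ι < lift.{u + 1} μ) {D : ι → Set Ordinal.{u}}
    (hD : ∀ i, IsClubOrd μ.ord (D i)) {b : Ordinal.{u}} (hb : b < μ.ord) :
    ∃ x, b < x ∧ x < μ.ord ∧ ∀ i, x ∈ D i := by
  have hcof : Order.cof (Iio μ.ord) = lift.{u + 1} μ := by
    rw [Ordinal.cof_Iio, ← Ordinal.lift_cof, hμ.cof_ord]
  have hclub := IsClub.iInter (f := fun i => (Subtype.val ⁻¹' D i : Set (Iio μ.ord)))
    (by rw [hcof]; simpa using hunc.ne') (by simpa [hcof] using hι)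
    fun i => (hD i).isClub_preimage_val
  obtain ⟨x, hx, hbx⟩ :=
    hclub.isCofinal ⟨Order.succ b, (Cardinal.isSuccLimit_ord hunc.le).succ_lt hb⟩
  exact ⟨x, Order.succ_le_iff.1 hbx, x.2, fun i => mem_iInter.1 hx i⟩

theorem otp_lt_ord {μ : Cardinal} {s : Set Ordinal} (h : #s < lift.{1} μ) : otp s < μ.ord := by
  have hlt : Ordinal.type (Subrel ((· < ·) : Ordinal → Ordinal → Prop) (· ∈ s)) <
      Ordinal.lift.{1} μ.ord := by
    rw [Cardinal.lift_ord, Cardinal.lt_ord, Ordinal.card_type]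
    exact h
  obtain ⟨o, ho, ho'⟩ := Ordinal.lt_lift_iff.1 hlt
  have hle : otp s ≤ o := csInf_le (OrderBot.bddBelow _) ho'
  exact hle.trans_lt ho

namespace ClubCond

open scoped Classical

variable {μ : Cardinal} {C : Set Ordinal} {f : Ordinal → Ordinal → Ordinal}
  {Cab : Ordinal → Ordinal → Set Ordinal} {p : ClubCond μ C f Cab}

theorem isSome_F_of_mem_c {γ x : Ordinal} (hγ : γ ∈ p.B) (hx : x ∈ p.c γ) :
    (p.F x (f γ x)).isSome := by
  by_cases hC : γ ∈ C
  · simp [p.F_one γ hγ hC x hx]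
  · simp [p.F_zero γ hγ hC x hx]

theorem le.δ_le {q : ClubCond μ C f Cab} (hpq : p.le q) {γ : Ordinal} (hγ : γ ∈ p.B) :
    p.δ ≤ q.δ :=
  (q.c_max γ (hpq.1 hγ)).2 _ ((hpq.2.2.2.1 γ hγ).1 (p.c_max γ hγ).1)

/-- Conditions under which `p` extends to a condition with support `B` and new top level `δ`
(see `Extendable.extension`). -/
structure Extendable (p : ClubCond μ C f Cab) (B : Set Ordinal) (δ : Ordinal) : Prop where
  aleph0_le : ℵ₀ ≤ μ
  B_subset : p.B ⊆ B
  subset_Iio : B ⊆ Iio (Order.succ μ).ord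
  mk_lt : #B < lift.{1} μ
  lt_ord : δ < μ.ord
  lt_of_isSome_F : ∀ i k, (p.F i k).isSome → i < δ
  mem_Cab : ∀ γ ∈ B, ∀ γ' ∈ B, γ < γ' → δ ∈ Cab γ γ'
  injOn : InjOn (f · δ) B
  f_lt_ord : ∀ γ ∈ B, ∀ i < μ.ord, f γ i < μ.ord

/-- Below level `δ` the new values are irrelevant; at level `δ` they record membership in `C`,
which is consistent because `f · δ` is injective on `B`. -/
noncomputable def extF (p : ClubCond μ C f Cab) (B : Set Ordinal) (δ i k : Ordinal) :
    Option (Fin 2) :=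
  (p.F i k).or <| if i ≤ δ ∧ ∃ γ ∈ B, k = f γ i then
    some (if ∃ γ ∈ B, γ ∈ C ∧ k = f γ i then 1 else 0) else none

noncomputable def extC (p : ClubCond μ C f Cab) (δ γ : Ordinal) : Set Ordinal :=
  insert δ {x | γ ∈ p.B ∧ x ∈ p.c γ}

noncomputable def extG (p : ClubCond μ C f Cab) (B : Set Ordinal) (δ γ γ' : Ordinal) :
    Option Ordinal :=
  (p.g γ γ').or <| if γ ∈ B ∧ γ' ∈ B ∧ γ < γ' then some δ else none

variable {B : Set Ordinal} {δ : Ordinal}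

theorem isSome_extF {i k : Ordinal} :
    (p.extF B δ i k).isSome ↔ (p.F i k).isSome ∨ (i ≤ δ ∧ ∃ γ ∈ B, k = f γ i) := by
  unfold extF
  split_ifs with h <;> simp [h]

theorem extF_of_isSome {i k : Ordinal} (hF : (p.F i k).isSome) : p.extF B δ i k = p.F i k :=
  Option.or_of_isSome hF

theorem isSome_extG {γ γ' : Ordinal} :
    (p.extG B δ γ γ').isSome ↔ (p.g γ γ').isSome ∨ (γ ∈ B ∧ γ' ∈ B ∧ γ < γ') := by
  unfold extG
  split_ifs with h <;> simp [h]

theorem extG_of_isSome {γ γ' : Ordinal} (hg : (p.g γ γ').isSome) :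
    p.extG B δ γ γ' = p.g γ γ' :=
  Option.or_of_isSome hg

theorem extG_eq_some_iff {γ γ' ξ : Ordinal} :
    p.extG B δ γ γ' = some ξ ↔
      p.g γ γ' = some ξ ∨ (p.g γ γ' = none ∧ γ ∈ B ∧ γ' ∈ B ∧ γ < γ' ∧ δ = ξ) := by
  unfold extG
  rw [Option.or_eq_some_iff]
  by_cases h : γ ∈ B ∧ γ' ∈ B ∧ γ < γ'
  · simp [h]
  · simp only [h, if_false, reduceCtorEq, and_false, or_false]
    tauto

namespace Extendable

theorem lt_of_mem_c (h : p.Extendable B δ) {γ x : Ordinal} (hγ : γ ∈ p.B) (hx : x ∈ p.c γ) :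
    x < δ :=
  h.lt_of_isSome_F _ _ (isSome_F_of_mem_c hγ hx)

theorem le_of_mem_extC (h : p.Extendable B δ) {γ x : Ordinal} (hx : x ∈ p.extC δ γ) :
    x ≤ δ := by
  rcases hx with rfl | ⟨hγ, hx⟩
  exacts [le_rfl, (h.lt_of_mem_c hγ hx).le]

theorem extF_self (h : p.Extendable B δ) {γ : Ordinal} (hγ : γ ∈ B) :
    p.extF B δ δ (f γ δ) = some (if γ ∈ C then 1 else 0) := by
  have hnone : p.F δ (f γ δ) = none :=
    Option.not_isSome_iff_eq_none.1 fun hs => (h.lt_of_isSome_F _ _ hs).false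
  have hnew : δ ≤ δ ∧ ∃ γ' ∈ B, f γ δ = f γ' δ := ⟨le_rfl, γ, hγ, rfl⟩
  have hC : (∃ γ' ∈ B, γ' ∈ C ∧ f γ δ = f γ' δ) ↔ γ ∈ C :=
    ⟨fun ⟨_, hγ', hC, he⟩ => h.injOn hγ hγ' he ▸ hC, fun hC => ⟨γ, hγ, hC, rfl⟩⟩
  simp only [extF, hnone, Option.none_or, if_pos hnew, hC]

theorem extF_of_mem_extC (h : p.Extendable B δ) {γ x : Ordinal} (hγ : γ ∈ B)
    (hx : x ∈ p.extC δ γ) : p.extF B δ x (f γ x) = some (if γ ∈ C then 1 else 0) := by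
  rcases hx with rfl | ⟨hγp, hx⟩
  · exact h.extF_self hγ
  · rw [extF_of_isSome (isSome_F_of_mem_c hγp hx)]
    split_ifs with hC
    exacts [p.F_one γ hγp hC x hx, p.F_zero γ hγp hC x hx]

theorem extF_dom_lt (h : p.Extendable B δ) {i k : Ordinal} (hs : (p.extF B δ i k).isSome) :
    i < μ.ord ∧ k < μ.ord := by
  rcases isSome_extF.1 hs with hF | ⟨hi, γ, hγ, rfl⟩
  · exact p.F_dom_sub i k hF
  · have hiμ := hi.trans_lt h.lt_ord
    exact ⟨hiμ, h.f_lt_ord γ hγ i hiμ⟩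

theorem mk_dom_extF_lt (h : p.Extendable B δ) :
    #{x : Ordinal × Ordinal | (p.extF B δ x.1 x.2).isSome} < lift.{1} μ := by
  have hμ : ℵ₀ ≤ lift.{1} μ := aleph0_le_lift.2 h.aleph0_le
  have hIic : #(Iic δ) < lift.{1} μ := by
    rw [← Order.Iio_succ, Cardinal.mk_Iio_ordinal, Cardinal.lift_lt, ← Cardinal.lt_ord]
    exact (Cardinal.isSuccLimit_ord h.aleph0_le).succ_lt h.lt_ord
  have hsub : {x : Ordinal × Ordinal | (p.extF B δ x.1 x.2).isSome} ⊆
      {x | (p.F x.1 x.2).isSome} ∪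
        (fun y : Ordinal × Ordinal => (y.1, f y.2 y.1)) '' (Iic δ ×ˢ B) := by
    rintro ⟨i, k⟩ hs
    rcases isSome_extF.1 hs with hF | ⟨hi, γ, hγ, hk⟩
    exacts [Or.inl hF, Or.inr ⟨(i, γ), ⟨hi, hγ⟩, Prod.ext rfl hk.symm⟩]
  have hnew : #(Iic δ ×ˢ B) < lift.{1} μ := by
    rw [Cardinal.mk_setProd]
    exact mul_lt_of_lt hμ hIic h.mk_lt
  calc _ ≤ _ := mk_le_mk_of_subset hsub
    _ ≤ _ := mk_union_le _ _
    _ < lift.{1} μ := add_lt_of_lt hμ p.F_card (mk_image_le.trans_lt hnew)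

theorem extF_j_spec (h : p.Extendable B δ) {γ : Ordinal} (hγ : γ ∈ B) :
    {i | i < μ.ord ∧ (p.extF B δ i (f γ i)).isSome} = Iio (Order.succ δ) := by
  ext i
  simp only [mem_ofPred_eq, mem_Iio, Order.lt_succ_iff, isSome_extF]
  constructor
  · rintro ⟨-, hF | ⟨hi, -⟩⟩
    exacts [(h.lt_of_isSome_F _ _ hF).le, hi]
  · exact fun hi => ⟨hi.trans_lt h.lt_ord, Or.inr ⟨hi, γ, hγ, rfl⟩⟩

theorem sSup_mem_extC (h : p.Extendable B δ) {γ : Ordinal} {S : Set Ordinal}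
    (hS : S ⊆ p.extC δ γ) (hne : S.Nonempty) : sSup S ∈ p.extC δ γ := by
  by_cases hδ : δ ∈ S
  · have hmax : IsGreatest S δ := ⟨hδ, fun x hx => h.le_of_mem_extC (hS hx)⟩
    rw [hmax.csSup_eq]
    exact mem_insert _ _
  · have hS' : ∀ x ∈ S, γ ∈ p.B ∧ x ∈ p.c γ := fun x hx =>
      (hS hx).resolve_left (ne_of_mem_of_not_mem hx hδ)
    obtain ⟨x, hx⟩ := hne
    have hγ := (hS' x hx).1
    exact Or.inr ⟨hγ, p.c_closed γ hγ S (fun y hy => (hS' y hy).2) ⟨x, hx⟩⟩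

theorem extG_dom (h : p.Extendable B δ) {γ γ' : Ordinal} (hs : (p.extG B δ γ γ').isSome) :
    γ ∈ B ∧ γ' ∈ B ∧ γ < γ' := by
  rcases isSome_extG.1 hs with hg | hB
  · obtain ⟨hγ, hγ', hlt⟩ := p.g_dom _ _ hg
    exact ⟨h.B_subset hγ, h.B_subset hγ', hlt⟩
  · exact hB

theorem extG_lt_ord (h : p.Extendable B δ) {γ γ' ξ : Ordinal}
    (hs : p.extG B δ γ γ' = some ξ) : ξ < μ.ord := by
  rcases extG_eq_some_iff.1 hs with hg | ⟨-, -, -, -, rfl⟩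
  exacts [p.g_rng _ _ _ hg, h.lt_ord]

theorem extG_cond (h : p.Extendable B δ) {γ γ' ξ : Ordinal} (hs : p.extG B δ γ γ' = some ξ) :
    (p.extC δ γ \ Iio ξ).Nonempty ∧ p.extC δ γ \ Iio ξ ⊆ Cab γ γ' := by
  rcases extG_eq_some_iff.1 hs with hg | ⟨-, hγ, hγ', hlt, rfl⟩
  · obtain ⟨hγ, hγ', hlt⟩ := p.g_dom γ γ' (by simp [hg])
    obtain ⟨⟨x, hx, hxξ⟩, hsub⟩ := p.g_cond _ _ _ hg
    refine ⟨⟨x, Or.inr ⟨hγ, hx⟩, hxξ⟩, ?_⟩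
    rintro y ⟨rfl | ⟨-, hy⟩, hyξ⟩
    exacts [h.mem_Cab _ (h.B_subset hγ) _ (h.B_subset hγ') hlt, hsub ⟨hy, hyξ⟩]
  · refine ⟨⟨δ, mem_insert _ _, self_notMem_Iio⟩, ?_⟩
    rintro y ⟨hy, hyδ⟩
    rw [(h.le_of_mem_extC hy).antisymm (not_lt.1 hyδ)]
    exact h.mem_Cab γ hγ γ' hγ' hlt

noncomputable def extension (h : p.Extendable B δ) : ClubCond μ C f Cab where
  B := B
  F := p.extF B δ
  c := p.extC δ
  g := p.extG B δ
  j _ := Order.succ δ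
  δ := δ
  B_sub := h.subset_Iio
  B_card := h.mk_lt
  F_dom_sub _ _ := h.extF_dom_lt
  F_card := h.mk_dom_extF_lt
  j_spec _ := h.extF_j_spec
  c_sub _ _ _ hx := Order.lt_succ_iff.2 (h.le_of_mem_extC hx)
  c_closed _ _ _ := h.sSup_mem_extC
  c_max _ _ := ⟨mem_insert _ _, fun _ => h.le_of_mem_extC⟩
  F_one γ hγ hC x hx := by rw [h.extF_of_mem_extC hγ hx, if_pos hC]
  F_zero γ hγ hC x hx := by rw [h.extF_of_mem_extC hγ hx, if_neg hC]
  g_dom _ _ := h.extG_dom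
  g_rng _ _ _ := h.extG_lt_ord
  g_cond _ _ _ := h.extG_cond

theorem le_extension (h : p.Extendable B δ) : p.le h.extension := by
  refine ⟨h.B_subset, fun i k v hv => ?_, fun γ γ' ξ hξ => ?_,
    fun γ hγ => ⟨fun x hx => Or.inr ⟨hγ, hx⟩, ?_⟩, fun _ γ hγ γ' hγ' hlt => ?_⟩
  · rw [← hv]
    exact extF_of_isSome (by simp [hv])
  · rw [← hξ]
    exact extG_of_isSome (by simp [hξ])
  · rintro x (rfl | ⟨-, hx⟩) hxδ
    exacts [absurd hxδ (not_le.2 (h.lt_of_mem_c hγ (p.c_max γ hγ).1)), hx]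
  · exact isSome_extG.2 (Or.inr ⟨h.B_subset hγ, h.B_subset hγ', hlt⟩)

end Extendable

theorem exists_extendable (hμ : μ.IsRegular) (hunc : ℵ₀ < μ)
    (hCab : ∀ α β : Ordinal, α < β → β < (Order.succ μ).ord →
      IsClubOrd μ.ord (Cab α β) ∧ ∀ i ∈ Cab α β, f α i < f β i)
    (hf : ∀ γ < (Order.succ μ).ord, ∀ i < μ.ord, f γ i < μ.ord)
    (p : ClubCond μ C f Cab) {α β : Ordinal} (hα : α < (Order.succ μ).ord) (hβ : β < μ.ord) :
    ∃ δ, β ≤ δ ∧ p.Extendable (insert α p.B) δ := by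
  have hμ' : ℵ₀ ≤ lift.{1} μ := aleph0_le_lift.2 hμ.aleph0_le
  set B := insert α p.B
  have hB : B ⊆ Iio (Order.succ μ).ord := insert_subset hα p.B_sub
  have hBcard : #B < lift.{1} μ :=
    mk_insert_le.trans_lt (add_lt_of_lt hμ' p.B_card (one_lt_aleph0.trans_le hμ'))
  have hdom : #{i | ∃ k, (p.F i k).isSome} < lift.{1} μ := by
    have hsub : {i | ∃ k, (p.F i k).isSome} ⊆ Prod.fst '' {x | (p.F x.1 x.2).isSome} :=
      fun i ⟨k, hk⟩ => ⟨(i, k), hk, rfl⟩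
    exact (mk_le_mk_of_subset hsub).trans_lt (mk_image_le.trans_lt p.F_card)
  obtain ⟨b, hb, hFb⟩ := hμ.exists_lt_ord_forall_lt
    (S := {i | ∃ k, (p.F i k).isSome}) (fun i ⟨k, hk⟩ => (p.F_dom_sub i k hk).1) hdom
  have hpairs : #{x : B × B // x.1.1 < x.2.1} < lift.{1} μ := by
    refine (mk_subtype_le _).trans_lt ?_
    rw [mk_prod, Cardinal.lift_id]
    exact mul_lt_of_lt hμ' hBcard hBcard
  obtain ⟨δ, hbδ, hδ, hδCab⟩ := exists_lt_mem_iInter_of_isClubOrd hμ hunc hpairs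
    (D := fun x => Cab x.1.1 x.1.2) (fun x => (hCab _ _ x.2 (hB x.1.2.2)).1) (max_lt hb hβ)
  have hmem : ∀ γ ∈ B, ∀ γ' ∈ B, γ < γ' → δ ∈ Cab γ γ' :=
    fun γ hγ γ' hγ' hlt => hδCab ⟨(⟨γ, hγ⟩, ⟨γ', hγ'⟩), hlt⟩
  have hmono : StrictMonoOn (f · δ) B :=
    fun γ hγ γ' hγ' hlt => (hCab γ γ' hlt (hB hγ')).2 δ (hmem γ hγ γ' hγ' hlt)
  refine ⟨δ, (le_max_right _ _).trans hbδ.le, ⟨hμ.aleph0_le, subset_insert _ _, hB, hBcard, hδ,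
    fun i k hk => (hFb i ⟨k, hk⟩).trans_le ((le_max_left _ _).trans hbδ.le), hmem,
    hmono.injOn, fun γ hγ => hf γ (hB hγ)⟩⟩

end ClubCond

theorem clubCond_dense_open_general (μ : Cardinal) (hsmall : μ ^< μ = μ) (hunc : ℵ₀ < μ)
    (C : Set Ordinal)
    (f : Ordinal → Ordinal → Ordinal)
    (hf : ∀ α < (Order.succ μ).ord, ∃ a : Ordinal → Set Ordinal,
      IsFiltrationOrd μ α a ∧ ∀ i < μ.ord, f α i = otp (a i))
    (Cab : Ordinal → Ordinal → Set Ordinal)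
    (hCab : ∀ α β : Ordinal, α < β → β < (Order.succ μ).ord →
      IsClubOrd μ.ord (Cab α β) ∧ ∀ i ∈ Cab α β, f α i < f β i)
    (α : Ordinal) (hα : α < (Order.succ μ).ord) (β : Ordinal) (hβ : β < μ.ord) :
    (∀ p : ClubCond μ C f Cab, ∃ q : ClubCond μ C f Cab,
      p.le q ∧ α ∈ q.B ∧ β ≤ q.δ) ∧
    (∀ p q : ClubCond μ C f Cab, p.le q → α ∈ p.B ∧ β ≤ p.δ → α ∈ q.B ∧ β ≤ q.δ) := by
  have hμ := Cardinal.isRegular_of_powerlt_self hunc.le hsmall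
  have hf_lt : ∀ γ < (Order.succ μ).ord, ∀ i < μ.ord, f γ i < μ.ord := fun γ hγ i hi => by
    obtain ⟨a, ha, hfa⟩ := hf γ hγ
    exact hfa i hi ▸ otp_lt_ord (ha.2.2.2.1 i hi)
  refine ⟨fun p => ?_, fun p q hpq ⟨hαp, hβp⟩ => ⟨hpq.1 hαp, hβp.trans (hpq.δ_le hαp)⟩⟩
  obtain ⟨δ, hβδ, h⟩ := ClubCond.exists_extendable hμ hunc hCab hf_lt p hα hβ
  exact ⟨h.extension, h.le_extension, mem_insert _ _, hβδ⟩

/-- For `μ = μ^{<μ} > ℵ₀`, `λ = μ⁺`, every `α < λ` and `β < μ`, the set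
`D_{αβ} = {p ∈ ℙ(C) : α ∈ B^p and δ^p ≥ β}` is dense and open in the club-coding
poset `ℙ(C)`. -/
theorem clubCond_dense_open (μ : Cardinal) (hsmall : μ ^< μ = μ) (hunc : ℵ₀ < μ)
    (C : Set Ordinal) (hC : IsClubOrd (Order.succ μ).ord C)
    (f : Ordinal → Ordinal → Ordinal)
    (hf : ∀ α < (Order.succ μ).ord, ∃ a : Ordinal → Set Ordinal,
      IsFiltrationOrd μ α a ∧ ∀ i < μ.ord, f α i = otp (a i))
    (Cab : Ordinal → Ordinal → Set Ordinal)
    (hCab : ∀ α β : Ordinal, α < β → β < (Order.succ μ).ord →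
      IsClubOrd μ.ord (Cab α β) ∧ ∀ i ∈ Cab α β, f α i < f β i)
    (α : Ordinal) (hα : α < (Order.succ μ).ord) (β : Ordinal) (hβ : β < μ.ord) :
    (∀ p : ClubCond μ C f Cab, ∃ q : ClubCond μ C f Cab,
      p.le q ∧ α ∈ q.B ∧ β ≤ q.δ) ∧
    (∀ p q : ClubCond μ C f Cab, p.le q → α ∈ p.B ∧ β ≤ p.δ → α ∈ q.B ∧ β ≤ q.δ) :=
  clubCond_dense_open_general μ hsmall hunc C f hf Cab hCab α hα β hβ
end

section
/- Let μ = μ^{<μ} > ℵ₀, λ = μ⁺, and let ℙ = ℙ(C) be the club-coding poset associated to a club C ⊆ λ, a choice of μ-filtrations of each α < λ with canonical functions f_α, and clubs C_{αβ} ⊆ μ (for α < β < λ) with f_α(i) < f_β(i) for all i ∈ C_{αβ}. Suppose G ⊆ ℙ is a filter (downward closed and upward directed) such that G meets D_{αβ} = {p ∈ ℙ : α ∈ B^p and δ^p ≥ β} for every α < λ and β < μ. Set f = ⋃_{p ∈ G} f^p and X = {(i,j) ∈ μ × μ : f(i,j) = 1}. Then for every α < λ the set c_α = ⋃{c^p_α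 : p ∈ G, α ∈ B^p} is a closed unbounded subset of μ; for every α ∈ C the set {i < μ : (i, f_α(i)) ∈ X} contains a closed unbounded subset of μ; and for every α ∈ λ ∖ C the set {i < μ : (i, f_α(i)) ∉ X} contains a closed unbounded subset of μ. -/
open Cardinal Ordinal Set

/-- `C` is a closed unbounded subset of (the set of ordinals below) `κ`:
it consists of ordinals `< κ`, is unbounded in `κ`, and contains the supremum
of each of its nonempty subsets that is bounded below `κ`. -/
def IsClub' (κ : Ordinal) (C : Set Ordinal) : Prop :=
  C ⊆ Set.Iio κ ∧
  (∀ a < κ, ∃ b ∈ C, a ≤ b) ∧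
  (∀ S ⊆ C, S.Nonempty → sSup S < κ → sSup S ∈ C)

/-- `⟨a i : i < μ⟩` is a `μ`-filtration of the ordinal `α`: an increasing continuous
sequence of subsets of `α`, each of cardinality `< μ`, with union `α`. -/
def IsFiltration' (μ : Cardinal) (α : Ordinal) (a : Ordinal → Set Ordinal) : Prop :=
  (∀ i < μ.ord, a i ⊆ Set.Iio α) ∧
  (∀ i j : Ordinal, i ≤ j → j < μ.ord → a i ⊆ a j) ∧
  (∀ ν < μ.ord, Order.IsSuccLimit ν → a ν = ⋃ i ∈ Set.Iio ν, a i) ∧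
  (∀ i < μ.ord, Cardinal.mk ↥(a i) < Cardinal.lift.{1,0} μ) ∧
  (⋃ i ∈ Set.Iio μ.ord, a i) = Set.Iio α

/-! Two conditions of a filter have a common extension, and extensions only extend `F^p` and
end-extend each `c^p α`. Hence the conditions in `G` agree on `F`, and `c^q α` is exactly the part
of `c_α` below `δ^q`. So a bounded subset of `c_α` lies in `c^q α` for any `q ∈ G` with `δ^q`
above its supremum, and closedness of `c^q α` gives closedness of `c_α`; genericity gives
unboundedness. The colour of `α` fixes `F (i, f α i)` on every `c^p α`, so `c_α` itself witnesses
the last two claims. -/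

namespace ClubCond

variable {μ : Cardinal} {C : Set Ordinal} {f : Ordinal → Ordinal → Ordinal}
  {Cab : Ordinal → Ordinal → Set Ordinal}

theorem j_le_ord (p : ClubCond μ C f Cab) {α : Ordinal} (hα : α ∈ p.B) : p.j α ≤ μ.ord := by
  by_contra! h
  have hmem : μ.ord ∈ Set.Iio (p.j α) := h
  rw [← p.j_spec α hα] at hmem
  exact lt_irrefl _ hmem.1

theorem c_subset_Iio_ord (p : ClubCond μ C f Cab) {α : Ordinal} (hα : α ∈ p.B) :
    p.c α ⊆ Set.Iio μ.ord :=
  fun _ hx => lt_of_lt_of_le (p.c_sub α hα hx) (p.j_le_ord hα)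

theorem F_eq_of_common_extension {p q r : ClubCond μ C f Cab} (hpr : p.le r) (hqr : q.le r)
    {i k : Ordinal} {v w : Fin 2} (hp : p.F i k = some v) (hq : q.F i k = some w) : v = w :=
  Option.some_injective _ ((hpr.2.1 i k v hp).symm.trans (hqr.2.1 i k w hq))

/-- The set `c_α` of the paper. -/
def genericClub (G : Set (ClubCond μ C f Cab)) (α : Ordinal) : Set Ordinal :=
  ⋃ p ∈ {p ∈ G | α ∈ p.B}, p.c α

variable {G : Set (ClubCond μ C f Cab)} {α : Ordinal}

theorem mem_genericClub {x : Ordinal} :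
    x ∈ genericClub G α ↔ ∃ p ∈ G, α ∈ p.B ∧ x ∈ p.c α := by
  simp only [genericClub, Set.mem_iUnion, Set.mem_ofPred_eq, exists_prop, and_assoc]

theorem mem_c_of_mem_genericClub (hdir : ∀ p ∈ G, ∀ q ∈ G, ∃ r ∈ G, p.le r ∧ q.le r)
    {p : ClubCond μ C f Cab} (hp : p ∈ G) (hα : α ∈ p.B) {x : Ordinal}
    (hx : x ∈ genericClub G α) (hxδ : x ≤ p.δ) : x ∈ p.c α := by
  obtain ⟨q, hq, hqα, hxq⟩ := mem_genericClub.1 hx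
  obtain ⟨r, -, hpr, hqr⟩ := hdir p hp q hq
  exact (hpr.2.2.2.1 α hα).2 x ((hqr.2.2.2.1 α hqα).1 hxq) hxδ

theorem isClub'_genericClub (hdir : ∀ p ∈ G, ∀ q ∈ G, ∃ r ∈ G, p.le r ∧ q.le r)
    (hmeets : ∀ β < μ.ord, ∃ p ∈ G, α ∈ p.B ∧ β ≤ p.δ) :
    IsClub' μ.ord (genericClub G α) := by
  have hsub : genericClub G α ⊆ Set.Iio μ.ord := fun x hx => by
    obtain ⟨p, -, hα, hxp⟩ := mem_genericClub.1 hx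
    exact p.c_subset_Iio_ord hα hxp
  refine ⟨hsub, fun β hβ => ?_, fun S hS hne hlt => ?_⟩
  · obtain ⟨p, hp, hα, hβδ⟩ := hmeets β hβ
    exact ⟨p.δ, mem_genericClub.2 ⟨p, hp, hα, (p.c_max α hα).1⟩, hβδ⟩
  · obtain ⟨p, hp, hα, hSδ⟩ := hmeets (sSup S) hlt
    have hbdd : BddAbove S := ⟨μ.ord, fun y hy => (hsub (hS hy)).le⟩
    have hSp : S ⊆ p.c α := fun x hx =>
      mem_c_of_mem_genericClub hdir hp hα (hS hx) ((le_csSup hbdd hx).trans hSδ)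
    exact mem_genericClub.2 ⟨p, hp, hα, p.c_closed α hα S hSp hne⟩

theorem exists_F_eq_one_of_mem_genericClub (hαC : α ∈ C) {i : Ordinal}
    (hi : i ∈ genericClub G α) : ∃ p ∈ G, p.F i (f α i) = some 1 := by
  obtain ⟨p, hp, hα, hip⟩ := mem_genericClub.1 hi
  exact ⟨p, hp, p.F_one α hα hαC i hip⟩

theorem not_exists_F_eq_one_of_mem_genericClub
    (hdir : ∀ p ∈ G, ∀ q ∈ G, ∃ r ∈ G, p.le r ∧ q.le r) (hαC : α ∉ C) {i : Ordinal}
    (hi : i ∈ genericClub G α) : ¬ ∃ p ∈ G, p.F i (f α i) = some 1 := by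
  rintro ⟨p, hp, hp1⟩
  obtain ⟨q, hq, hα, hiq⟩ := mem_genericClub.1 hi
  obtain ⟨r, -, hpr, hqr⟩ := hdir p hp q hq
  exact absurd (F_eq_of_common_extension hpr hqr hp1 (q.F_zero α hα hαC i hiq)) (by decide)

end ClubCond

theorem clubCond_generic_filter_general (μ : Cardinal)
    (C : Set Ordinal) (hC : IsClub' (Order.succ μ).ord C)
    (f : Ordinal → Ordinal → Ordinal)
    (Cab : Ordinal → Ordinal → Set Ordinal)
    (G : Set (ClubCond μ C f Cab))
    (hdir : ∀ p ∈ G, ∀ q ∈ G, ∃ r ∈ G, p.le r ∧ q.le r)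
    (hmeets : ∀ α < (Order.succ μ).ord, ∀ β < μ.ord, ∃ p ∈ G, α ∈ p.B ∧ β ≤ p.δ) :
    (∀ α < (Order.succ μ).ord,
      IsClub' μ.ord (⋃ p ∈ {p ∈ G | α ∈ ClubCond.B p}, ClubCond.c p α)) ∧
    (∀ α ∈ C, ∃ D : Set Ordinal, IsClub' μ.ord D ∧
      ∀ i ∈ D, ∃ p ∈ G, p.F i (f α i) = some 1) ∧
    (∀ α < (Order.succ μ).ord, α ∉ C → ∃ D : Set Ordinal, IsClub' μ.ord D ∧
      ∀ i ∈ D, ¬ ∃ p ∈ G, p.F i (f α i) = some 1) := by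
  have hclub : ∀ α < (Order.succ μ).ord, IsClub' μ.ord (ClubCond.genericClub G α) :=
    fun α hα => ClubCond.isClub'_genericClub hdir (hmeets α hα)
  refine ⟨hclub, fun α hαC => ?_, fun α hα hαC => ?_⟩
  · exact ⟨_, hclub α (hC.1 hαC), fun i => ClubCond.exists_F_eq_one_of_mem_genericClub hαC⟩
  · exact ⟨_, hclub α hα, fun i => ClubCond.not_exists_F_eq_one_of_mem_genericClub hdir hαC⟩

/-- Suppose `μ = μ^{<μ} > ℵ₀`, `λ = μ⁺`, and `G` is a filter on the club-coding poset
`ℙ(C)` meeting every `D_{αβ} = {p : α ∈ B^p, δ^p ≥ β}` (`α < λ`, `β < μ`). Let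
`X = {(i,k) : (⋃_{p ∈ G} F^p)(i,k) = 1}`. Then for every `α < λ` the set
`c_α = ⋃ {c^p α : p ∈ G, α ∈ B^p}` is a club of `μ`; for `α ∈ C` the set
`{i < μ : (i, f α i) ∈ X}` contains a club of `μ`; and for `α < λ` with `α ∉ C` the set
`{i < μ : (i, f α i) ∉ X}` contains a club of `μ`. -/
theorem clubCond_generic_filter (μ : Cardinal) (hsmall : μ ^< μ = μ) (hunc : ℵ₀ < μ)
    (C : Set Ordinal) (hC : IsClub' (Order.succ μ).ord C)
    (f : Ordinal → Ordinal → Ordinal)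
    (hf : ∀ α < (Order.succ μ).ord, ∃ a : Ordinal → Set Ordinal,
      IsFiltration' μ α a ∧ ∀ i < μ.ord, f α i = otp (a i))
    (Cab : Ordinal → Ordinal → Set Ordinal)
    (hCab : ∀ α β : Ordinal, α < β → β < (Order.succ μ).ord →
      IsClub' μ.ord (Cab α β) ∧ ∀ i ∈ Cab α β, f α i < f β i)
    (G : Set (ClubCond μ C f Cab))
    (hdown : ∀ p q : ClubCond μ C f Cab, p.le q → q ∈ G → p ∈ G)
    (hdir : ∀ p ∈ G, ∀ q ∈ G, ∃ r ∈ G, p.le r ∧ q.le r)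
    (hmeets : ∀ α < (Order.succ μ).ord, ∀ β < μ.ord, ∃ p ∈ G, α ∈ p.B ∧ β ≤ p.δ) :
    (∀ α < (Order.succ μ).ord,
      IsClub' μ.ord (⋃ p ∈ {p ∈ G | α ∈ ClubCond.B p}, ClubCond.c p α)) ∧
    (∀ α ∈ C, ∃ D : Set Ordinal, IsClub' μ.ord D ∧
      ∀ i ∈ D, ∃ p ∈ G, p.F i (f α i) = some 1) ∧
    (∀ α < (Order.succ μ).ord, α ∉ C → ∃ D : Set Ordinal, IsClub' μ.ord D ∧
      ∀ i ∈ D, ¬ ∃ p ∈ G, p.F i (f α i) = some 1) :=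
  clubCond_generic_filter_general μ C hC f Cab G hdir hmeets
end
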